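/- Let p > 3 be a prime, set n = (p-1)/2, and let t be a p-adic integer. Then ∑_{k=0}^{n} binom(pt, k) · binom(-1 - pt, k) · (1 + 2pt)/(1 + 2k) ≡ 1 + 2t + 4·p·t·q_p(2) (mod p²), where q_p(2) = (2^{p-1} - 1)/p is the Fermat quotient; here the sum is a p-adic number (the k = n term involves division by 1 + 2n = p) and the congruence means the difference lies in p²·ℤ_p. -/

import Mathlib

/-!
Pairing the factor `x - (j + 1)` of `C(x, k)` with the factor `-1 - x - j` of `C(-1 - x, k)`
gives `(j + 1)² - x²`, so for `x = pt` and `0 < k < p`,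
`C(x, k) C(-1 - x, k) ≡ -x (x + k) / k² (mod p³)`. Hence the `k`-th term is
`≡ -pt / (k (2k + 1)) (mod p²)` for `0 < k < n`, and the last term, whose denominator
`1 + 2n = p` cancels against `x = pt`, is `≡ -t / n ≡ 2t + 2pt`. It remains to compare the
alternating harmonic sum `∑_{0<k<n} 1 / (k (2k + 1)) = 2 ∑_{0<k<n} (1 / (2k) - 1 / (2k + 1))`
with the Fermat quotient: `(2^p - 2) / p = ∑_j C(p, j + 1) / p ≡ ∑_j (-1)^j / (j + 1) (mod p)`,
since `C(p, j + 1) / p = C(p - 1, j) / (j + 1)` and `C(p - 1, j) ≡ (-1)^j`.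
-/

/-- The generalized binomial coefficient `C(x, n) = x(x-1)⋯(x-n+1)/n!` for a
`p`-adic number `x` (a `p`-adic integer when `x` is). -/
noncomputable def padicChoose {p : ℕ} [Fact p.Prime] (x : ℚ_[p]) (n : ℕ) : ℚ_[p] :=
  (∏ j ∈ Finset.range n, (x - j)) / (n.factorial : ℚ_[p])

open Finset
open scoped Nat

theorem IsUltrametricDist.norm_add_le_of_le {M : Type*} [SeminormedAddGroup M] [IsUltrametricDist M]
    {a b : M} {ε : ℝ} (ha : ‖a‖ ≤ ε) (hb : ‖b‖ ≤ ε) : ‖a + b‖ ≤ ε :=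
  (norm_add_le_max a b).trans (max_le ha hb)

theorem IsUltrametricDist.norm_prod_sub_prod_le {R ι : Type*} [NormedCommRing R] [NormOneClass R]
    [IsUltrametricDist R] (s : Finset ι) {f g : ι → R} {ε : ℝ} (hε : 0 ≤ ε)
    (hf : ∀ i ∈ s, ‖f i‖ ≤ 1) (hg : ∀ i ∈ s, ‖g i‖ ≤ 1) (hfg : ∀ i ∈ s, ‖f i - g i‖ ≤ ε) :
    ‖∏ i ∈ s, f i - ∏ i ∈ s, g i‖ ≤ ε := by
  induction s using Finset.cons_induction with
  | empty => simpa using hε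
  | cons a s ha ih =>
    simp only [forall_mem_cons] at hf hg hfg
    rw [prod_cons, prod_cons,
      show f a * ∏ i ∈ s, f i - g a * ∏ i ∈ s, g i
        = (f a - g a) * ∏ i ∈ s, f i + g a * (∏ i ∈ s, f i - ∏ i ∈ s, g i) by ring]
    have hprod : ‖∏ i ∈ s, f i‖ ≤ 1 :=
      (Finset.norm_prod_le _ _).trans (prod_le_one (fun _ _ ↦ norm_nonneg _) hf.2)
    refine (norm_add_le_max _ _).trans (max_le ?_ ?_) <;> refine (norm_mul_le _ _).trans ?_
    · exact (mul_le_of_le_one_right (norm_nonneg _) hprod).trans hfg.1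
    · exact (mul_le_of_le_one_left (norm_nonneg _) hg.1).trans (ih hf.2 hg.2 hfg.2)

theorem prod_sub_mul_prod_neg_one_sub_sub {R : Type*} [CommRing R] (x : R) (l : ℕ) :
    (∏ j ∈ range (l + 1), (x - j)) * ∏ j ∈ range (l + 1), (-1 - x - j) =
      -(x * (x + (l + 1))) * ∏ i ∈ range l, (((i : R) + 1) ^ 2 - x ^ 2) := by
  induction l with
  | zero =>
    simp only [zero_add, range_one, prod_singleton, Nat.cast_zero, sub_zero, range_zero, prod_empty,
      mul_one]
    ring
  | succ l ih =>
    rw [prod_range_succ (fun j : ℕ ↦ x - j), prod_range_succ (fun j : ℕ ↦ -1 - x - j),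
      prod_range_succ (fun i : ℕ ↦ ((i : R) + 1) ^ 2 - x ^ 2)]
    push_cast
    linear_combination ((x - (l + 1)) * (-1 - x - (l + 1))) * ih

theorem sum_range_inv_mul_two_mul_add_three {K : Type*} [Field K] [CharZero K] (m : ℕ) :
    ∑ k ∈ range m, 1 / (((k : K) + 1) * (2 * k + 3)) =
      2 - 2 * ∑ j ∈ range (2 * m + 2), (-1) ^ j / ((j : K) + 1) - 1 / (m + 1) := by
  induction m with
  | zero => norm_num [sum_range_succ]
  | succ m ih =>
    have key : (1 : K) / ((m + 1) * (2 * m + 3)) =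
        -2 * (1 / (2 * m + 3) - 1 / (2 * m + 4)) - 1 / (m + 2) + 1 / (m + 1) := by
      have h1 : (m : K) + 1 ≠ 0 := by norm_cast
      have h2 : (m : K) + 2 ≠ 0 := by norm_cast
      -- `field_simp` only recognizes these in its own normal form `m * 2 + c`
      have h3 : (m : K) * 2 + 3 ≠ 0 := by norm_cast
      have h4 : (m : K) * 2 + 4 ≠ 0 := by norm_cast
      field_simp
      ring
    have e : (-1 : K) ^ (2 * m + 2) = 1 := by rw [pow_add, pow_mul]; norm_num
    rw [sum_range_succ, ih, show 2 * (m + 1) + 2 = 2 * m + 2 + 1 + 1 by ring,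
      sum_range_succ _ (2 * m + 2 + 1), sum_range_succ _ (2 * m + 2), pow_succ _ (2 * m + 2), e]
    push_cast
    linear_combination key

section Padic

variable {p : ℕ} [Fact p.Prime]

theorem Padic.exists_coe_eq_of_norm_le_one {x : ℚ_[p]} (hx : ‖x‖ ≤ 1) :
    ∃ y : ℤ_[p], (y : ℚ_[p]) = x :=
  ⟨⟨x, hx⟩, rfl⟩

theorem Padic.norm_p_mul_le {t : ℚ_[p]} (ht : ‖t‖ ≤ 1) : ‖(p : ℚ_[p]) * t‖ ≤ (p : ℝ)⁻¹ := by
  rw [norm_mul, Padic.norm_p]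
  exact mul_le_of_le_one_right (by positivity) ht

theorem Padic.norm_natCast_eq_one_of_pos_of_lt {k : ℕ} (h0 : 0 < k) (hk : k < p) :
    ‖(k : ℚ_[p])‖ = 1 :=
  Padic.norm_natCast_eq_one_iff.mpr <|
    (Nat.Prime.coprime_iff_not_dvd Fact.out).mpr (Nat.not_dvd_of_pos_of_lt h0 hk)

theorem Padic.norm_factorial_eq_one {k : ℕ} (hk : k < p) : ‖(k ! : ℚ_[p])‖ = 1 :=
  Padic.norm_natCast_eq_one_iff.mpr <| (Nat.Prime.coprime_iff_not_dvd Fact.out).mpr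
    fun h ↦ hk.not_ge ((Nat.Prime.dvd_factorial Fact.out).mp h)

theorem padicChoose_natCast (m k : ℕ) : padicChoose (m : ℚ_[p]) k = m.choose k := by
  rw [Nat.cast_choose_eq_descPochhammer_div, descPochhammer_eval_eq_prod_range, padicChoose]

theorem padicChoose_succ (x : ℚ_[p]) (k : ℕ) :
    padicChoose x (k + 1) = x / ((k : ℚ_[p]) + 1) * padicChoose (x - 1) k := by
  have hk : (k : ℚ_[p]) + 1 ≠ 0 := by norm_cast
  have hf : (k ! : ℚ_[p]) ≠ 0 := Nat.cast_ne_zero.mpr k.factorial_ne_zero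
  simp only [padicChoose]
  rw [prod_range_succ', Nat.factorial_succ,
    prod_congr rfl fun j _ ↦ show x - ((j + 1 : ℕ) : ℚ_[p]) = x - 1 - j by push_cast; ring]
  push_cast
  field_simp
  ring

theorem padicChoose_neg_one (k : ℕ) : padicChoose (-1 : ℚ_[p]) k = (-1) ^ k := by
  have hprod : ∏ j ∈ range k, ((-1 : ℚ_[p]) - j) = (-1) ^ k * k ! := by
    induction k with
    | zero => simp
    | succ k ih =>
      rw [prod_range_succ, ih, Nat.factorial_succ]
      push_cast
      ring
  rw [padicChoose, hprod, mul_div_cancel_right₀ _ (Nat.cast_ne_zero.mpr k.factorial_ne_zero)]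

theorem norm_padicChoose_sub_padicChoose_le {x y : ℚ_[p]} (hx : ‖x‖ ≤ 1) (hy : ‖y‖ ≤ 1) {k : ℕ}
    (hk : k < p) : ‖padicChoose x k - padicChoose y k‖ ≤ ‖x - y‖ := by
  rw [padicChoose, padicChoose, ← sub_div, norm_div, Padic.norm_factorial_eq_one hk, div_one]
  obtain ⟨x, rfl⟩ := Padic.exists_coe_eq_of_norm_le_one hx
  obtain ⟨y, rfl⟩ := Padic.exists_coe_eq_of_norm_le_one hy
  refine IsUltrametricDist.norm_prod_sub_prod_le _ (norm_nonneg _)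
    (fun j _ ↦ by exact_mod_cast (x - j).norm_le_one)
    (fun j _ ↦ by exact_mod_cast (y - j).norm_le_one) fun j _ ↦ by rw [sub_sub_sub_cancel_right]

theorem Padic.norm_two_pow_sub_two_div_sub_sum_le :
    ‖((2 : ℚ_[p]) ^ p - 2) / p - ∑ j ∈ range (p - 1), (-1) ^ j / ((j : ℚ_[p]) + 1)‖ ≤
      (p : ℝ)⁻¹ := by
  have hp : p.Prime := Fact.out
  have hsum : (2 : ℚ_[p]) ^ p - 2 = ∑ j ∈ range (p - 1), (p.choose (j + 1) : ℚ_[p]) := by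
    have h := congrArg (Nat.cast : ℕ → ℚ_[p]) (Nat.sum_range_choose p)
    rw [show p + 1 = p - 1 + 1 + 1 by have := hp.two_le; omega, sum_range_succ,
      sum_range_succ', Nat.sub_add_cancel hp.one_le, Nat.choose_self, Nat.choose_zero_right] at h
    push_cast at h
    linear_combination -h
  have hterm : ∀ j ∈ range (p - 1),
      (p.choose (j + 1) : ℚ_[p]) / (p : ℚ_[p]) - (-1) ^ j / ((j : ℚ_[p]) + 1) =
      (padicChoose ((p : ℚ_[p]) - 1) j - padicChoose (-1) j) / ((j : ℚ_[p]) + 1) := by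
    intro j _
    have hp0 : (p : ℚ_[p]) ≠ 0 := Nat.cast_ne_zero.mpr hp.ne_zero
    rw [← padicChoose_natCast, padicChoose_succ, padicChoose_neg_one]
    field_simp
  rw [hsum, sum_div, ← sum_sub_distrib, sum_congr rfl hterm]
  refine IsUltrametricDist.norm_sum_le_of_forall_le_of_nonneg (by positivity) fun j hj ↦ ?_
  have hj : j + 1 < p := by rw [mem_range] at hj; omega
  have hp1 : ‖(p : ℚ_[p]) - 1‖ ≤ 1 := by exact_mod_cast ((p : ℤ_[p]) - 1).norm_le_one
  rw [norm_div, ← Nat.cast_add_one, Padic.norm_natCast_eq_one_of_pos_of_lt j.succ_pos hj, div_one]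
  calc _ ≤ ‖(p : ℚ_[p]) - 1 - (-1)‖ :=
        norm_padicChoose_sub_padicChoose_le hp1 (by rw [norm_neg, norm_one]) (by omega)
    _ = (p : ℝ)⁻¹ := by rw [sub_neg_eq_add, sub_add_cancel, Padic.norm_p]

theorem Padic.norm_four_sub_sum_sub_four_mul_le {m : ℕ} (hm : 2 * m + 3 = p) :
    ‖4 - ∑ k ∈ range m, 1 / (((k : ℚ_[p]) + 1) * (2 * k + 3)) -
      4 * (((2 : ℚ_[p]) ^ (p - 1) - 1) / p)‖ ≤ (p : ℝ)⁻¹ := by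
  have hp0 : (p : ℚ_[p]) ≠ 0 := Nat.cast_ne_zero.mpr (Fact.out : p.Prime).ne_zero
  have hm1 : (m : ℚ_[p]) + 1 ≠ 0 := by norm_cast
  have key : 4 - ∑ k ∈ range m, 1 / (((k : ℚ_[p]) + 1) * (2 * k + 3)) -
      4 * (((2 : ℚ_[p]) ^ (p - 1) - 1) / p) =
      2 * (∑ j ∈ range (p - 1), (-1) ^ j / ((j : ℚ_[p]) + 1) - ((2 : ℚ_[p]) ^ p - 2) / p) +
        p / ((m : ℚ_[p]) + 1) := by
    have h2p : (2 : ℚ_[p]) ^ p = 2 * 2 ^ (p - 1) := by rw [← pow_succ']; congr 1; omega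
    have hpm : (p : ℚ_[p]) = 2 * m + 3 := by exact_mod_cast hm.symm
    rw [sum_range_inv_mul_two_mul_add_three, show 2 * m + 2 = p - 1 by omega, h2p]
    field_simp
    rw [hpm]
    ring
  rw [key]
  refine IsUltrametricDist.norm_add_le_of_le ?_ ?_
  · rw [norm_mul, norm_sub_rev]
    exact mul_le_of_le_one_left (norm_nonneg _) (by exact_mod_cast (2 : ℤ_[p]).norm_le_one)
      |>.trans Padic.norm_two_pow_sub_two_div_sub_sum_le
  · rw [norm_div, Padic.norm_p, ← Nat.cast_add_one,
      Padic.norm_natCast_eq_one_of_pos_of_lt m.succ_pos (by omega), div_one]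

theorem Padic.norm_prod_sq_sub_sq_sub_factorial_sq_le {x : ℚ_[p]} (hx : ‖x‖ ≤ 1) (l : ℕ) :
    ‖∏ i ∈ range l, (((i : ℚ_[p]) + 1) ^ 2 - x ^ 2) - (l ! : ℚ_[p]) ^ 2‖ ≤ ‖x‖ ^ 2 := by
  rw [← Finset.prod_range_add_one_eq_factorial, Nat.cast_prod, ← prod_pow]
  push_cast
  obtain ⟨y, rfl⟩ := Padic.exists_coe_eq_of_norm_le_one hx
  refine IsUltrametricDist.norm_prod_sub_prod_le _ (by positivity)
    (fun i _ ↦ by exact_mod_cast (((i : ℤ_[p]) + 1) ^ 2 - y ^ 2).norm_le_one)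
    (fun i _ ↦ by exact_mod_cast (((i : ℤ_[p]) + 1) ^ 2).norm_le_one) fun i _ ↦ ?_
  rw [sub_sub_cancel_left, norm_neg, norm_pow]

theorem norm_padicChoose_mul_padicChoose_neg_one_sub_add_le {x : ℚ_[p]} (hx : ‖x‖ ≤ 1) {k : ℕ}
    (hk0 : 0 < k) (hk : k < p) :
    ‖padicChoose x k * padicChoose (-1 - x) k + x * (x + (k : ℚ_[p])) / (k : ℚ_[p]) ^ 2‖ ≤
      ‖x‖ ^ 3 := by
  obtain ⟨l, rfl⟩ := Nat.exists_eq_add_one_of_ne_zero hk0.ne'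
  have hl : (l : ℚ_[p]) + 1 ≠ 0 := by norm_cast
  have hf : (l ! : ℚ_[p]) ≠ 0 := Nat.cast_ne_zero.mpr l.factorial_ne_zero
  have hxl : ‖x + (l + 1 : ℕ)‖ ≤ 1 := by
    obtain ⟨y, rfl⟩ := Padic.exists_coe_eq_of_norm_le_one hx
    exact_mod_cast (y + (l + 1 : ℕ)).norm_le_one
  have key : padicChoose x (l + 1) * padicChoose (-1 - x) (l + 1) +
      x * (x + ((l + 1 : ℕ) : ℚ_[p])) / ((l + 1 : ℕ) : ℚ_[p]) ^ 2 =
      -(x * (x + ((l + 1 : ℕ) : ℚ_[p])) *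
        (∏ i ∈ range l, (((i : ℚ_[p]) + 1) ^ 2 - x ^ 2) - (l ! : ℚ_[p]) ^ 2)) /
          ((l + 1) ! : ℚ_[p]) ^ 2 := by
    simp only [padicChoose]
    rw [div_mul_div_comm, prod_sub_mul_prod_neg_one_sub_sub, Nat.factorial_succ]
    push_cast
    field_simp
    ring
  rw [key, norm_div, norm_neg, norm_pow, Padic.norm_factorial_eq_one hk, one_pow, div_one,
    norm_mul, norm_mul, pow_succ' _ 2]
  gcongr
  · exact mul_le_of_le_one_right (norm_nonneg _) hxl
  · exact Padic.norm_prod_sq_sub_sq_sub_factorial_sq_le hx l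

theorem norm_padicChoose_mul_padicChoose_neg_one_sub_mul_div_add_le {x : ℚ_[p]} (hx : ‖x‖ ≤ 1)
    {k : ℕ} (hk0 : 0 < k) (hk : 2 * k + 1 < p) :
    ‖padicChoose x k * padicChoose (-1 - x) k * ((1 + 2 * x) / (1 + 2 * (k : ℚ_[p]))) +
      x / ((k : ℚ_[p]) * (1 + 2 * (k : ℚ_[p])))‖ ≤ ‖x‖ ^ 2 := by
  have hE := norm_padicChoose_mul_padicChoose_neg_one_sub_add_le hx hk0 (by omega)
  set E := padicChoose x k * padicChoose (-1 - x) k + x * (x + (k : ℚ_[p])) / (k : ℚ_[p]) ^ 2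
  have hk1 : ‖(k : ℚ_[p])‖ = 1 := Padic.norm_natCast_eq_one_of_pos_of_lt hk0 (by omega)
  have hk2 : ‖1 + 2 * (k : ℚ_[p])‖ = 1 := by
    rw [show 1 + 2 * (k : ℚ_[p]) = ((2 * k + 1 : ℕ) : ℚ_[p]) by push_cast; ring]
    exact Padic.norm_natCast_eq_one_of_pos_of_lt (by omega) hk
  have hx1 : ‖1 + 2 * x‖ ≤ 1 := by
    obtain ⟨y, rfl⟩ := Padic.exists_coe_eq_of_norm_le_one hx
    exact_mod_cast (1 + 2 * y).norm_le_one
  have hxk : ‖1 + 2 * (k : ℚ_[p]) + 2 * x‖ ≤ 1 := by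
    obtain ⟨y, rfl⟩ := Padic.exists_coe_eq_of_norm_le_one hx
    exact_mod_cast (1 + 2 * (k : ℤ_[p]) + 2 * y).norm_le_one
  have key : padicChoose x k * padicChoose (-1 - x) k * ((1 + 2 * x) / (1 + 2 * (k : ℚ_[p]))) +
      x / ((k : ℚ_[p]) * (1 + 2 * (k : ℚ_[p]))) =
      E * (1 + 2 * x) / (1 + 2 * (k : ℚ_[p])) +
        -(x ^ 2 * (1 + 2 * (k : ℚ_[p]) + 2 * x) / ((k : ℚ_[p]) ^ 2 * (1 + 2 * (k : ℚ_[p])))) := by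
    have hk0' : (k : ℚ_[p]) ≠ 0 := norm_ne_zero_iff.mp (by rw [hk1]; exact one_ne_zero)
    have hk2' : 1 + 2 * (k : ℚ_[p]) ≠ 0 := norm_ne_zero_iff.mp (by rw [hk2]; exact one_ne_zero)
    simp only [E]
    field_simp
    ring
  rw [key]
  refine IsUltrametricDist.norm_add_le_of_le ?_ ?_
  · rw [norm_div, norm_mul, hk2, div_one]
    calc ‖E‖ * ‖1 + 2 * x‖ ≤ ‖x‖ ^ 3 * 1 := by gcongr
      _ ≤ ‖x‖ ^ 2 := by rw [mul_one]; exact pow_le_pow_of_le_one (norm_nonneg _) hx (by norm_num)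
  · rw [norm_neg, norm_div, norm_mul, norm_mul, norm_pow, norm_pow, hk1, hk2, one_pow, mul_one,
      div_one]
    exact mul_le_of_le_one_right (by positivity) hxk

theorem norm_padicChoose_mul_padicChoose_neg_one_sub_mul_div_sub_le {t : ℚ_[p]} (ht : ‖t‖ ≤ 1)
    {n : ℕ} (hn : 2 * n + 1 = p) :
    ‖padicChoose ((p : ℚ_[p]) * t) n * padicChoose (-1 - (p : ℚ_[p]) * t) n *
        ((1 + 2 * ((p : ℚ_[p]) * t)) / (1 + 2 * (n : ℚ_[p]))) - (2 * t + 2 * ((p : ℚ_[p]) * t))‖ ≤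
      (p : ℝ)⁻¹ ^ 2 := by
  have hp : p.Prime := Fact.out
  have hn0 : 0 < n := by have := hp.two_le; omega
  have hT := Padic.norm_p_mul_le ht
  set T : ℚ_[p] := p * t
  have hT1 : ‖T‖ ≤ 1 := hT.trans (Nat.cast_inv_le_one p)
  have hE := norm_padicChoose_mul_padicChoose_neg_one_sub_add_le hT1 hn0 (by omega)
  set E := padicChoose T n * padicChoose (-1 - T) n + T * (T + (n : ℚ_[p])) / (n : ℚ_[p]) ^ 2
  have hn1 : ‖(n : ℚ_[p])‖ = 1 := Padic.norm_natCast_eq_one_of_pos_of_lt hn0 (by omega)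
  have hpn : 1 + 2 * (n : ℚ_[p]) = p := by rw [add_comm]; exact_mod_cast hn
  have key : padicChoose T n * padicChoose (-1 - T) n * ((1 + 2 * T) / (1 + 2 * (n : ℚ_[p]))) -
      (2 * t + 2 * T) =
      E * (1 + 2 * T) / (p : ℚ_[p]) +
        (-(t * T * ((p : ℚ_[p]) + 2 * T) / (n : ℚ_[p]) ^ 2) +
          -(t * (p : ℚ_[p]) ^ 2 / (n : ℚ_[p]))) := by
    have hn0' : (n : ℚ_[p]) ≠ 0 := norm_ne_zero_iff.mp (by rw [hn1]; exact one_ne_zero)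
    have hp0 : 1 + 2 * (n : ℚ_[p]) ≠ 0 := by
      rw [hpn]; exact Nat.cast_ne_zero.mpr hp.ne_zero
    -- with `1 + 2n = p`, `-t / n - 2t - 2pt = -tp² / n`
    simp only [E, T]
    rw [← hpn]
    field_simp
    ring
  have h2T : ‖2 * T‖ ≤ (p : ℝ)⁻¹ := by
    rw [norm_mul]
    exact mul_le_of_le_one_left (norm_nonneg _) (by exact_mod_cast (2 : ℤ_[p]).norm_le_one)
      |>.trans hT
  have h12T : ‖1 + 2 * T‖ ≤ 1 :=
    IsUltrametricDist.norm_add_le_of_le norm_one.le (h2T.trans (Nat.cast_inv_le_one p))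
  rw [key]
  refine IsUltrametricDist.norm_add_le_of_le ?_ (IsUltrametricDist.norm_add_le_of_le ?_ ?_)
  · rw [norm_div, norm_mul, Padic.norm_p, div_le_iff₀ (inv_pos.mpr (by exact_mod_cast hp.pos))]
    calc ‖E‖ * ‖1 + 2 * T‖ ≤ ‖T‖ ^ 3 * 1 := by gcongr
      _ ≤ (p : ℝ)⁻¹ ^ 3 := by rw [mul_one]; gcongr
      _ = (p : ℝ)⁻¹ ^ 2 * (p : ℝ)⁻¹ := by ring
  · rw [norm_neg, norm_div, norm_pow, hn1, one_pow, div_one, norm_mul, norm_mul, sq]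
    gcongr
    · exact mul_le_of_le_one_left (norm_nonneg _) ht |>.trans hT
    · exact IsUltrametricDist.norm_add_le_of_le Padic.norm_p.le h2T
  · rw [norm_neg, norm_div, hn1, div_one, norm_mul, norm_pow, Padic.norm_p]
    exact mul_le_of_le_one_left (by positivity) ht

end Padic

/-- For a prime `p > 3`, `n = (p-1)/2`, and a `p`-adic integer `t`:
`∑_{k=0}^{n} C(pt, k)·C(-1-pt, k)·(1+2pt)/(1+2k) ≡ 1 + 2t + 4·p·t·q_p(2) (mod p²)`,
where `q_p(2) = (2^{p-1}-1)/p` is the Fermat quotient; the sum is a `p`-adic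
number and the congruence means the difference lies in `p²·ℤ_p`, i.e. has
`p`-adic norm at most `p^{-2}`. -/
theorem sum_padicChoose_mul_div_odd_congr (p : ℕ) [Fact p.Prime] (hp : 3 < p)
    (n : ℕ) (hn : n = (p - 1) / 2) (t : ℤ_[p]) :
    ‖∑ k ∈ Finset.range (n + 1),
        padicChoose ((p : ℚ_[p]) * (t : ℚ_[p])) k *
          padicChoose (-1 - (p : ℚ_[p]) * (t : ℚ_[p])) k *
          ((1 + 2 * (p : ℚ_[p]) * (t : ℚ_[p])) / (1 + 2 * (k : ℚ_[p]))) -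
      (1 + 2 * (t : ℚ_[p]) +
        4 * (p : ℚ_[p]) * (t : ℚ_[p]) * (((2 ^ (p - 1) - 1 : ℚ) / p : ℚ) : ℚ_[p]))‖
      ≤ (p : ℝ) ^ (-2 : ℤ) := by
  obtain ⟨m, rfl⟩ : ∃ m, n = m + 1 := ⟨n - 1, by omega⟩
  have hpm : 2 * m + 3 = p := by
    obtain ⟨r, hr⟩ := (Fact.out : p.Prime).odd_of_ne_two (by omega)
    omega
  have ht : ‖(t : ℚ_[p])‖ ≤ 1 := by exact_mod_cast t.norm_le_one
  have hT := Padic.norm_p_mul_le ht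
  have hq : (((2 ^ (p - 1) - 1 : ℚ) / p : ℚ) : ℚ_[p]) = ((2 : ℚ_[p]) ^ (p - 1) - 1) / p := by
    push_cast; rfl
  set T : ℚ_[p] := (p : ℚ_[p]) * t
  set q : ℚ_[p] := ((2 : ℚ_[p]) ^ (p - 1) - 1) / p
  set a : ℕ → ℚ_[p] := fun k ↦
    padicChoose T k * padicChoose (-1 - T) k * ((1 + 2 * T) / (1 + 2 * (k : ℚ_[p])))
  set S := ∑ k ∈ range m, 1 / (((k : ℚ_[p]) + 1) * (2 * k + 3))
  have hsum : ∑ k ∈ range (m + 1 + 1), a k - (1 + 2 * t + 4 * T * q) =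
      ∑ k ∈ range m, (a (k + 1) + T / (((k + 1 : ℕ) : ℚ_[p]) * (1 + 2 * ((k + 1 : ℕ) : ℚ_[p])))) +
        (a (m + 1) - (2 * t + 2 * T)) + T * (4 - S - 4 * q) := by
    have ha0 : a 0 = 1 + 2 * T := by simp [a, padicChoose]
    rw [sum_range_succ, sum_range_succ', ha0, sum_add_distrib]
    have hS : ∑ k ∈ range m, T / (((k + 1 : ℕ) : ℚ_[p]) * (1 + 2 * ((k + 1 : ℕ) : ℚ_[p]))) =
        T * S := by
      rw [mul_sum]
      exact sum_congr rfl fun k _ ↦ by push_cast; ring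
    rw [hS]
    ring
  rw [hq, show (1 + 2 * (p : ℚ_[p]) * t) = 1 + 2 * T by ring,
    show 4 * (p : ℚ_[p]) * t = 4 * T by ring, hsum]
  calc _ ≤ (p : ℝ)⁻¹ ^ 2 := by
        refine IsUltrametricDist.norm_add_le_of_le (IsUltrametricDist.norm_add_le_of_le ?_ ?_) ?_
        · refine IsUltrametricDist.norm_sum_le_of_forall_le_of_nonneg (by positivity) fun k hk ↦ ?_
          exact (norm_padicChoose_mul_padicChoose_neg_one_sub_mul_div_add_le
            (hT.trans (Nat.cast_inv_le_one p)) k.succ_pos (by rw [mem_range] at hk; omega)).trans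
              (by gcongr)
        · exact norm_padicChoose_mul_padicChoose_neg_one_sub_mul_div_sub_le ht (by omega)
        · rw [norm_mul, sq]
          exact mul_le_mul hT (Padic.norm_four_sub_sum_sub_four_mul_le hpm) (norm_nonneg _)
            (by positivity)
    _ = (p : ℝ) ^ (-2 : ℤ) := by rw [zpow_neg, inv_pow]; rfl
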